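/- Let β be a braid word with inversion datum ι. Then the ground state s₀ (defined by s₀(e) = (ι(e)−1)/2) is a state and is valid for ι; it is the unique valid state taking all its values in {0,−1}; and every valid state s satisfies |s(e)| ≥ |s₀(e)| for every segment e ∈ E_β. -/

import Mathlib

/-!
Every allowed sign pattern at a crossing satisfies `ι(BL) + ι(BR) = ι(TL) + ι(TR)`, and on `±1`
values the map `ι ↦ (ι - 1)/2` is affine, so the ground state inherits conservation at crossings.
The crossing inequalities hold for any two values in `{0, -1}`. Finally, a valid state `s`
determines `ι = sign ∘ s`, so `s₀(e)` is `0` or `-1` according to the sign of `s(e)`; this equals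
`s(e)` when `s(e) ∈ {0, -1}`, and is bounded in absolute value by `|s(e)|` in general.
-/

/-- A braid word on `n` strands with `m` letters. Strand positions are 0-indexed:
the index `p : Fin n` represents the mathematical position `p+1 ∈ {1,…,n}`.
The `t`-th letter is a crossing of sign `ε t` involving the strand positions
`k t` and `k t + 1` (i.e. mathematical positions `k t + 1` and `k t + 2`). -/
structure BraidWord (n m : ℕ) where
  k : Fin m → ℕ
  hk : ∀ t, k t + 1 < n
  ε : Fin m → ℤ
  hε : ∀ t, ε t = 1 ∨ ε t = -1

namespace BraidWord

variable {n m : ℕ}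

/-- Segments of the closed braid diagram: `(p, t)` is the segment at horizontal
position `p` (0-indexed) and level `t` (mod `m`); the `t`-th letter has its bottom
at level `t` and its top at level `t+1`, and `(p, 0)` is the `p`-th closure segment. -/
abbrev Seg (n m : ℕ) := Fin n × Fin m

/-- Segment adjacent to the `t`-th crossing at the bottom left. -/
def eBL (β : BraidWord n m) (t : Fin m) : Seg n m :=
  (⟨β.k t, by have := β.hk t; omega⟩, t)

/-- Segment adjacent to the `t`-th crossing at the bottom right. -/
def eBR (β : BraidWord n m) (t : Fin m) : Seg n m :=
  (⟨β.k t + 1, β.hk t⟩, t)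

/-- Segment adjacent to the `t`-th crossing at the top left. -/
def eTL [NeZero m] (β : BraidWord n m) (t : Fin m) : Seg n m :=
  (⟨β.k t, by have := β.hk t; omega⟩, t + 1)

/-- Segment adjacent to the `t`-th crossing at the top right. -/
def eTR [NeZero m] (β : BraidWord n m) (t : Fin m) : Seg n m :=
  (⟨β.k t + 1, β.hk t⟩, t + 1)

/-- The writhe of a braid word: the sum of the signs of its crossings. -/
def writhe (β : BraidWord n m) : ℤ := ∑ t, β.ε t

/-- The allowed sign patterns `(BL, BR, TL, TR)` around a crossing of sign `e`. -/
def allowedQuad (e a b c d : ℤ) : Prop :=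
  if e = 1 then
    (a = 1 ∧ b = -1 ∧ c = -1 ∧ d = 1) ∨ (a = -1 ∧ b = 1 ∧ c = 1 ∧ d = -1) ∨
    (a = -1 ∧ b = -1 ∧ c = -1 ∧ d = -1) ∨ (a = -1 ∧ b = 1 ∧ c = -1 ∧ d = 1) ∨
    (a = 1 ∧ b = 1 ∧ c = 1 ∧ d = 1)
  else
    (a = 1 ∧ b = -1 ∧ c = -1 ∧ d = 1) ∨ (a = -1 ∧ b = 1 ∧ c = 1 ∧ d = -1) ∨
    (a = -1 ∧ b = -1 ∧ c = -1 ∧ d = -1) ∨ (a = 1 ∧ b = -1 ∧ c = 1 ∧ d = -1) ∨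
    (a = 1 ∧ b = 1 ∧ c = 1 ∧ d = 1)

/-- An inversion datum on a braid word: a `±1`-assignment to each segment,
constant along strands away from crossings, with allowed patterns at crossings. -/
def IsInvDatum [NeZero m] (β : BraidWord n m) (ι : Seg n m → ℤ) : Prop :=
  (∀ e : Seg n m, ι e = 1 ∨ ι e = -1) ∧
  (∀ (p : Fin n) (t : Fin m), p.val ≠ β.k t → p.val ≠ β.k t + 1 → ι (p, t) = ι (p, t + 1)) ∧
  (∀ t : Fin m, allowedQuad (β.ε t) (ι (β.eBL t)) (ι (β.eBR t)) (ι (β.eTL t)) (ι (β.eTR t)))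

/-- A state on a braid word: an integer assignment to each segment, constant along
strands away from crossings, conserved at each crossing. -/
def IsState [NeZero m] (β : BraidWord n m) (s : Seg n m → ℤ) : Prop :=
  (∀ (p : Fin n) (t : Fin m), p.val ≠ β.k t → p.val ≠ β.k t + 1 → s (p, t) = s (p, t + 1)) ∧
  (∀ t : Fin m, s (β.eBL t) + s (β.eBR t) = s (β.eTL t) + s (β.eTR t))

/-- The sign of an integer, with the convention that the sign of `0` is `+1`. -/
def isign (a : ℤ) : ℤ := if 0 ≤ a then 1 else -1

/-- A state is valid for an inversion datum `ι` if its signs agree with `ι` and the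
inequalities required for the extended `R`-matrix to be nonzero hold at each crossing. -/
def IsValid [NeZero m] (β : BraidWord n m) (ι s : Seg n m → ℤ) : Prop :=
  β.IsState s ∧ (∀ e : Seg n m, isign (s e) = ι e) ∧
  ∀ t : Fin m,
    if β.ε t = 1 then s (β.eTR t) ≤ s (β.eBL t) ∨ (0 ≤ s (β.eTR t) ∧ s (β.eBL t) < 0)
    else s (β.eTL t) ≤ s (β.eBR t) ∨ (0 ≤ s (β.eTL t) ∧ s (β.eBR t) < 0)

/-- The ground state associated to an inversion datum: `s₀(e) = (ι(e) - 1)/2 ∈ {0, -1}`. -/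
def groundState (ι : Seg n m → ℤ) : Seg n m → ℤ := fun e => (ι e - 1) / 2

/-- The (minimal) x-degree of a state:
`d_x(s) = -(n-1)/2 + ∑_t ε_t (s(e_BR(t)) + s(e_TR(t)) + 1)/2`. -/
def xdeg [NeZero m] (β : BraidWord n m) (s : Seg n m → ℤ) : ℚ :=
  -((n : ℚ) - 1) / 2 +
    ∑ t : Fin m, (β.ε t : ℚ) * (((s (β.eBR t) : ℚ) + (s (β.eTR t) : ℚ) + 1) / 2)

/-- A pair (braid word, inversion datum) is nice if every valid state has nonnegative
x-degree and only finitely many valid states have x-degree below any given bound. -/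
def IsNice [NeZero m] (β : BraidWord n m) (ι : Seg n m → ℤ) : Prop :=
  (∀ s, β.IsValid ι s → 0 ≤ β.xdeg s) ∧
  ∀ M : ℝ, {s : Seg n m → ℤ | β.IsValid ι s ∧ ((β.xdeg s : ℚ) : ℝ) ≤ M}.Finite

/-- The invariant `ℓ(β,ι) = -∑_{p=2}^{n} ι(b_p)/2 + ∑_t ε_t (1 + ι(e_BR(t))·ι(e_TR(t)))/4`. -/
def ell [NeZero m] (β : BraidWord n m) (ι : Seg n m → ℤ) : ℚ :=
  -(∑ p : Fin n, if p.val = 0 then 0 else (ι (p, 0) : ℚ)) / 2 +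
    ∑ t : Fin m, (β.ε t : ℚ) * ((1 + (ι (β.eBR t) : ℚ) * (ι (β.eTR t) : ℚ)) / 4)

theorem allowedQuad.add_eq {e a b c d : ℤ} (h : allowedQuad e a b c d) : a + b = c + d := by
  unfold allowedQuad at h
  split_ifs at h <;> omega

theorem two_mul_groundState {ι : Seg n m → ℤ} {e : Seg n m} (h : ι e = 1 ∨ ι e = -1) :
    2 * groundState ι e = ι e - 1 := by
  unfold groundState
  omega

theorem groundState_eq_zero_or_neg_one {ι : Seg n m → ℤ} {e : Seg n m}
    (h : ι e = 1 ∨ ι e = -1) : groundState ι e = 0 ∨ groundState ι e = -1 := by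
  unfold groundState
  omega

theorem isign_groundState {ι : Seg n m → ℤ} {e : Seg n m} (h : ι e = 1 ∨ ι e = -1) :
    isign (groundState ι e) = ι e := by
  unfold isign groundState
  split_ifs <;> omega

theorem isign_sub_one_div_two_eq {a : ℤ} (h : a = 0 ∨ a = -1) : (isign a - 1) / 2 = a := by
  rcases h with rfl | rfl <;> decide

theorem abs_isign_sub_one_div_two_le (a : ℤ) : |(isign a - 1) / 2| ≤ |a| := by
  by_cases ha : 0 ≤ a
  · simp [isign, ha]
  · simpa [isign, ha] using Int.one_le_abs (by omega : a ≠ 0)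

theorem le_or_nonneg_and_neg {a b : ℤ} (ha : a = 0 ∨ a = -1) (hb : b = 0 ∨ b = -1) :
    a ≤ b ∨ (0 ≤ a ∧ b < 0) := by
  omega

variable [NeZero m] {β : BraidWord n m} {ι s : Seg n m → ℤ}

theorem isState_groundState (hι : β.IsInvDatum ι) : β.IsState (groundState ι) := by
  obtain ⟨hsign, hstrand, hquad⟩ := hι
  refine ⟨fun p t hp hp' => by simp only [groundState, hstrand p t hp hp'], fun t => ?_⟩
  have hsum := (hquad t).add_eq
  have := two_mul_groundState (hsign (β.eBL t))
  have := two_mul_groundState (hsign (β.eBR t))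
  have := two_mul_groundState (hsign (β.eTL t))
  have := two_mul_groundState (hsign (β.eTR t))
  omega

theorem isValid_groundState (hι : β.IsInvDatum ι) : β.IsValid ι (groundState ι) := by
  have hmem := fun e => groundState_eq_zero_or_neg_one (hι.1 e)
  refine ⟨isState_groundState hι, fun e => isign_groundState (hι.1 e), fun t => ?_⟩
  split_ifs <;> exact le_or_nonneg_and_neg (hmem _) (hmem _)

theorem IsValid.eq_groundState (hs : β.IsValid ι s) (h : ∀ e, s e = 0 ∨ s e = -1) :
    s = groundState ι :=
  funext fun e => by rw [groundState, ← hs.2.1 e, isign_sub_one_div_two_eq (h e)]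

theorem IsValid.abs_groundState_le (hs : β.IsValid ι s) (e : Seg n m) :
    |groundState ι e| ≤ |s e| := by
  rw [groundState, ← hs.2.1 e]
  exact abs_isign_sub_one_div_two_le _

end BraidWord

/-- The ground state `s₀(e) = (ι(e)-1)/2` is a state and is valid for
`ι`; it is the unique valid state taking all its values in `{0, -1}`; and every valid
state `s` satisfies `|s(e)| ≥ |s₀(e)|` for every segment `e`. -/
theorem groundState_isState_isValid_unique (n m : ℕ) [NeZero m] (β : BraidWord n m)
    (ι : BraidWord.Seg n m → ℤ) (hι : β.IsInvDatum ι) :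
    β.IsState (BraidWord.groundState ι) ∧
    β.IsValid ι (BraidWord.groundState ι) ∧
    (∀ s : BraidWord.Seg n m → ℤ, β.IsValid ι s →
      (∀ e, s e = 0 ∨ s e = -1) → s = BraidWord.groundState ι) ∧
    (∀ s : BraidWord.Seg n m → ℤ, β.IsValid ι s →
      ∀ e, |BraidWord.groundState ι e| ≤ |s e|) :=
  ⟨BraidWord.isState_groundState hι, BraidWord.isValid_groundState hι,
    fun _ hs h => hs.eq_groundState h, fun _ hs => hs.abs_groundState_le⟩
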